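/- arXiv:2504.16624 — 4 statements merged into one kernel-verified Lean document; each statement's English description precedes it below -/
import Mathlib

section
/- An observation function Obs over Σ is a product observation over a distribution Ω = {Σ_1,…,Σ_n} (i.e., there exists a product language over Ω agreeing with Obs) if and only if for every trace σ in the domain of Obs, Obs(σ) = + exactly when for all i the local observation Obs_{Σ_i}(proj(σ, Σ_i)) = +. -/
/-! A product language `L` is closed under recombination: a trace whose every projection is the
projection of some trace of `L` lies in `L`. Hence the product languages agreeing with `Obs` all
contain the recombination closure of the positive observations, which is itself a product
language; so `Obs` is a product observation iff that closure agrees with `Obs`, which is the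
local-observation condition. -/

open Classical in
/-- Projection of a trace onto a sub-alphabet. -/
noncomputable def proj {A : Type*} (s : Set A) : List A → List A
  | [] => []
  | a :: σ => if a ∈ s then a :: proj s σ else proj s σ

/-- A distribution of the alphabet `A`: a family of sub-alphabets covering `A`. -/
def AlphabetDistribution {A : Type*} (Ω : Set (Set A)) : Prop := ⋃₀ Ω = Set.univ

/-- A language agrees with an observation function (`L ⊨ Obs`). -/
def Agrees {A : Type*} (L : Set (List A)) (Obs : List A → Option Bool) : Prop :=
  ∀ σ b, Obs σ = some b → (σ ∈ L ↔ b = true)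

/-- `L` is a product language over the distribution `Ω`: it is the parallel
composition of a family of languages over the component alphabets. -/
def ProductLang {A : Type*} (Ω : Set (Set A)) (L : Set (List A)) : Prop :=
  ∃ Ls : Set A → Set (List A),
    (∀ s ∈ Ω, ∀ σ ∈ Ls s, ∀ a ∈ σ, a ∈ s) ∧
    L = {σ | ∀ s ∈ Ω, proj s σ ∈ Ls s}

/-- `Ω ⊨ Obs`: some product language over `Ω` agrees with `Obs`. -/
def Models {A : Type*} (Ω : Set (Set A)) (Obs : List A → Option Bool) : Prop :=
  ∃ L, ProductLang Ω L ∧ Agrees L Obs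

/-- A counter-example to `Ω ⊨ Obs`: a negative observation `σN` together with,
for each component alphabet, a positive observation with matching projection. -/
def IsCED {A : Type*} (Ω : Set (Set A)) (Obs : List A → Option Bool)
    (σN : List A) (P : Set A → List A) : Prop :=
  Obs σN = some false ∧
  ∀ s ∈ Ω, Obs (P s) = some true ∧ proj s σN = proj s (P s)

/-- The connectivity preorder: `Ω` is less connecting than `Ω'`. -/
def lessConn {A : Type*} (Ω Ω' : Set (Set A)) : Prop :=
  ∀ s ∈ Ω, ∃ t ∈ Ω', s ⊆ t

lemma mem_of_mem_proj {A : Type*} {s : Set A} {a : A} :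
    ∀ {σ : List A}, a ∈ proj s σ → a ∈ s
  | [], h => by simp [proj] at h
  | b :: σ, h => by
    by_cases hb : b ∈ s
    · rw [proj, if_pos hb, List.mem_cons] at h
      exact h.elim (· ▸ hb) mem_of_mem_proj
    · rw [proj, if_neg hb] at h
      exact mem_of_mem_proj h

/-- The least product language over `Ω` containing `P`. -/
def productClosure {A : Type*} (Ω : Set (Set A)) (P : Set (List A)) : Set (List A) :=
  {σ | ∀ s ∈ Ω, ∃ τ ∈ P, proj s τ = proj s σ}

lemma subset_productClosure {A : Type*} (Ω : Set (Set A)) (P : Set (List A)) :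
    P ⊆ productClosure Ω P :=
  fun σ hσ _ _ => ⟨σ, hσ, rfl⟩

lemma productClosure_mono {A : Type*} (Ω : Set (Set A)) {P Q : Set (List A)} (h : P ⊆ Q) :
    productClosure Ω P ⊆ productClosure Ω Q :=
  fun _ hσ s hs => (hσ s hs).imp fun _ ⟨hτ, hproj⟩ => ⟨h hτ, hproj⟩

lemma productLang_productClosure {A : Type*} (Ω : Set (Set A)) (P : Set (List A)) :
    ProductLang Ω (productClosure Ω P) :=
  ⟨fun s => proj s '' P, fun _ _ _ ⟨_, _, hτ⟩ _ ha => mem_of_mem_proj (hτ ▸ ha), rfl⟩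

lemma ProductLang.productClosure_subset {A : Type*} {Ω : Set (Set A)} {L : Set (List A)}
    (hL : ProductLang Ω L) : productClosure Ω L ⊆ L := by
  obtain ⟨Ls, -, rfl⟩ := hL
  intro σ hσ s hs
  obtain ⟨τ, hτ, hproj⟩ := hσ s hs
  exact hproj ▸ hτ s hs

theorem models_iff_local_obs_general {A : Type*} (Ω : Set (Set A))
    (Obs : List A → Option Bool) :
    Models Ω Obs ↔
      ∀ σ b, Obs σ = some b →
        (b = true ↔ ∀ s ∈ Ω, ∃ τ, Obs τ = some true ∧ proj s τ = proj s σ) := by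
  let Pos := {τ | Obs τ = some true}
  change Models Ω Obs ↔ ∀ σ b, Obs σ = some b → (b = true ↔ σ ∈ productClosure Ω Pos)
  constructor
  · rintro ⟨L, hL, hAg⟩ σ b hσ
    have hPos : Pos ⊆ L := fun τ hτ => (hAg τ true hτ).mpr rfl
    refine ⟨fun hb => subset_productClosure Ω Pos (show Obs σ = some true from hb ▸ hσ),
      fun hcl => (hAg σ b hσ).mp (hL.productClosure_subset (productClosure_mono Ω hPos hcl))⟩
  · exact fun h => ⟨_, productLang_productClosure Ω Pos, fun σ b hσ => (h σ b hσ).symm⟩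

/-- `Obs` is a product observation over `Ω` iff every observed trace is positive
exactly when all of its local observations are positive. -/
theorem models_iff_local_obs {A : Type*} (Ω : Set (Set A)) (hΩ : AlphabetDistribution Ω)
    (Obs : List A → Option Bool) (hfin : {σ | Obs σ ≠ none}.Finite) :
    Models Ω Obs ↔
      ∀ σ b, Obs σ = some b →
        (b = true ↔ ∀ s ∈ Ω, ∃ τ, Obs τ = some true ∧ proj s τ = proj s σ) :=
  models_iff_local_obs_general Ω Obs
end

section
/- If Ω ≼ Ω' (Ω is less connecting than Ω'), then every counter-example (σ_N, P') to Ω' ⊨ Obs induces a counter-example (σ_N, P) to Ω ⊨ Obs with the same negative trace and positive image contained in that of P'. In particular CED(Ω, Obs) ≼ CED(Ω', Obs). -/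
/-! Projecting onto `t` and then onto `s ⊆ t` is projecting onto `s`, so a positive trace
that agrees with `σN` on a component `t` of `Ω'` also agrees with it on every `s ⊆ t`. Hence
`P s := P' t`, for some `t ∈ Ω'` containing `s`, is a counter-example to `Ω ⊨ Obs`. -/

theorem proj_proj_of_subset {A : Type*} {s t : Set A} (hst : s ⊆ t) (σ : List A) :
    proj s (proj t σ) = proj s σ := by
  induction σ with
  | nil => rfl
  | cons a σ ih =>
    by_cases hat : a ∈ t
    · by_cases has : a ∈ s <;> simp [proj, hat, has, ih]
    · have has : a ∉ s := fun has => hat (hst has)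
      simp [proj, hat, has, ih]

theorem proj_eq_proj_of_subset {A : Type*} {s t : Set A} (hst : s ⊆ t) {σ τ : List A}
    (h : proj t σ = proj t τ) : proj s σ = proj s τ := by
  rw [← proj_proj_of_subset hst σ, h, proj_proj_of_subset hst τ]

/-- If `Ω ≼ Ω'`, every counter-example to `Ω' ⊨ Obs` induces a counter-example to
`Ω ⊨ Obs` with the same negative trace and positive image contained in that of the
original (hence `CED(Ω,Obs) ≼ CED(Ω',Obs)`). -/
theorem ced_mono_lessConn {A : Type*} (Ω Ω' : Set (Set A))
    (Obs : List A → Option Bool) (h : lessConn Ω Ω')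
    (σN : List A) (P' : Set A → List A) (hce : IsCED Ω' Obs σN P') :
    ∃ P : Set A → List A, IsCED Ω Obs σN P ∧ ∀ s ∈ Ω, ∃ t ∈ Ω', P s = P' t := by
  classical
  choose t ht hst using h
  let P s := if hs : s ∈ Ω then P' (t s hs) else []
  have hP : ∀ s (hs : s ∈ Ω), P s = P' (t s hs) := fun s hs => dif_pos hs
  refine ⟨P, ⟨hce.1, fun s hs => ?_⟩, fun s hs => ⟨t s hs, ht s hs, hP s hs⟩⟩
  obtain ⟨hpos, hproj⟩ := hce.2 _ (ht s hs)
  rw [hP s hs]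
  exact ⟨hpos, proj_eq_proj_of_subset (hst s hs) hproj⟩
end

section
/- If σ is a negative counter-example for the parallel composition of hypotheses (σ ∉ L(SUL) but σ ∈ L(H_1 ∥ … ∥ H_n)) and the global language decomposes along Ω, then there exists an index i such that proj(σ, Σ_i) ∈ L(H_i) but proj(σ, Σ_i) ∉ proj(L(SUL), Σ_i); dually, if σ is a positive counter-example (σ ∈ L(SUL) but σ ∉ L(H)), then for some i, proj(σ, Σ_i) ∉ L(H_i) while proj(σ, Σ_i) ∈ proj(L(SUL), Σ_i). Hence every counter-example is valid for at least one local learner. -/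
/-- Every counter-example is valid for at least one local learner: a negative
counter-example yields a component where the hypothesis accepts but the SUL
projection rejects, and a positive one yields a component where the hypothesis
rejects but the SUL projection accepts. -/
theorem cex_valid_for_one {A : Type*} {n : ℕ} (Ω : Fin n → Set A)
    (LS : Set (List A))
    (hprod : LS = {τ | ∀ i, proj (Ω i) τ ∈ proj (Ω i) '' LS})
    (LH : Fin n → Set (List A)) (σ : List A) :
    ((σ ∉ LS ∧ (∀ i, proj (Ω i) σ ∈ LH i)) →
      ∃ i, proj (Ω i) σ ∈ LH i ∧ proj (Ω i) σ ∉ proj (Ω i) '' LS) ∧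
    ((σ ∈ LS ∧ ¬ (∀ i, proj (Ω i) σ ∈ LH i)) →
      ∃ i, proj (Ω i) σ ∉ LH i ∧ proj (Ω i) σ ∈ proj (Ω i) '' LS) := by
  constructor
  · rintro ⟨hns, hall⟩
    rw [hprod] at hns
    simp only [Set.mem_setOf_eq, not_forall] at hns
    obtain ⟨i, hi⟩ := hns
    exact ⟨i, hall i, hi⟩
  · rintro ⟨hs, hnall⟩
    push_neg at hnall
    obtain ⟨i, hi⟩ := hnall
    exact ⟨i, hi, ⟨σ, hs, rfl⟩⟩
end

section
/- Suppose Ω ⊨ Obs and Ω ⊭ Obs ∪ {(σ, b)} for a new observation (σ, b). Then every counter-example (σ_N, P) to Ω ⊨ Obs ∪ {(σ,b)} involves σ: if b = −, then σ_N = σ and all P(Σ_i) lie in Dom(Obs); if b = +, then σ_N ∈ Dom(Obs) and σ is in the positive image of P, with all other entries of P in Dom(Obs). -/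
/-! A counter-example to `Obs ∪ {(σ, b)}` in which `σ` occurs neither as the negative trace nor
among the positive ones only uses observations of `Obs`, so it is a counter-example to `Ω ⊨ Obs`,
which is impossible. Reading off which role `σ` can play according to its sign `b` gives the two
cases. -/

theorem Models.not_isCED {A : Type*} {Ω : Set (Set A)} {Obs : List A → Option Bool}
    (hmod : Models Ω Obs) (σN : List A) (P : Set A → List A) : ¬ IsCED Ω Obs σN P := by
  rintro ⟨hneg, hpos⟩
  obtain ⟨L, ⟨Ls, -, rfl⟩, hAg⟩ := hmod
  have hσN : σN ∈ {σ | ∀ s ∈ Ω, proj s σ ∈ Ls s} := fun s hs => by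
    obtain ⟨hPs, hproj⟩ := hpos s hs
    rw [hproj]
    exact (hAg (P s) true hPs).mpr rfl s hs
  simpa using (hAg σN false hneg).mp hσN

section

open Classical

theorem ne_of_extend_eq_some {A : Type*} {Obs : List A → Option Bool} {σ τ : List A}
    {b c : Bool} (h : (if τ = σ then some b else Obs τ) = some c) (hbc : b ≠ c) : τ ≠ σ := by
  rintro rfl
  simp_all

theorem extend_eq_some_iff_of_ne {A : Type*} {Obs : List A → Option Bool} {σ τ : List A}
    {b c : Bool} (hτ : τ ≠ σ) : (if τ = σ then some b else Obs τ) = some c ↔ Obs τ = some c := by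
  rw [if_neg hτ]

theorem IsCED.of_extend {A : Type*} {Ω : Set (Set A)} {Obs : List A → Option Bool}
    {σ σN : List A} {b : Bool} {P : Set A → List A}
    (h : IsCED Ω (fun τ => if τ = σ then some b else Obs τ) σN P) (hN : σN ≠ σ)
    (hP : ∀ s ∈ Ω, P s ≠ σ) : IsCED Ω Obs σN P :=
  ⟨(extend_eq_some_iff_of_ne hN).mp h.1, fun s hs =>
    ⟨(extend_eq_some_iff_of_ne (hP s hs)).mp (h.2 s hs).1, (h.2 s hs).2⟩⟩

end

open Classical in
theorem global_cex_structure_general {A : Type*} (Ω : Set (Set A))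
    (Obs : List A → Option Bool) (hmod : Models Ω Obs)
    (σ : List A) (b : Bool) :
    ∀ (σN : List A) (P : Set A → List A),
      IsCED Ω (fun τ => if τ = σ then some b else Obs τ) σN P →
        (b = false → σN = σ ∧ ∀ s ∈ Ω, Obs (P s) = some true) ∧
        (b = true → Obs σN = some false ∧ (∃ s ∈ Ω, P s = σ) ∧
          ∀ s ∈ Ω, P s = σ ∨ Obs (P s) = some true) := by
  intro σN P hced
  constructor
  · rintro rfl
    have hPσ : ∀ s ∈ Ω, P s ≠ σ := fun s hs =>
      ne_of_extend_eq_some (hced.2 s hs).1 (by decide)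
    refine ⟨by_contra fun hN => hmod.not_isCED σN P (hced.of_extend hN hPσ), fun s hs => ?_⟩
    exact (extend_eq_some_iff_of_ne (hPσ s hs)).mp (hced.2 s hs).1
  · rintro rfl
    have hN : σN ≠ σ := ne_of_extend_eq_some hced.1 (by decide)
    have hPs : ∀ s ∈ Ω, P s = σ ∨ Obs (P s) = some true := fun s hs =>
      (eq_or_ne (P s) σ).imp_right fun hne => (extend_eq_some_iff_of_ne hne).mp (hced.2 s hs).1
    refine ⟨(extend_eq_some_iff_of_ne hN).mp hced.1, ?_, hPs⟩
    by_contra! hPσ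
    exact hmod.not_isCED σN P (hced.of_extend hN hPσ)

open Classical in
/-- Structure of counter-examples to the distribution after a global
counter-example `(σ, b)`: every counter-example to `Ω ⊨ Obs ∪ {(σ,b)}` involves
`σ`. If `b = −` then its negative trace is `σ` and all positive entries lie in
`Dom(Obs)`; if `b = +` then its negative trace lies in `Dom(Obs)` and `σ` occurs
in the positive image, all other entries lying in `Dom(Obs)`. -/
theorem global_cex_structure {A : Type*} (Ω : Set (Set A))
    (hΩ : AlphabetDistribution Ω) (Obs : List A → Option Bool)
    (hfin : {τ | Obs τ ≠ none}.Finite) (hmod : Models Ω Obs)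
    (σ : List A) (b : Bool) (hnew : Obs σ = none)
    (hnot : ¬ Models Ω (fun τ => if τ = σ then some b else Obs τ)) :
    ∀ (σN : List A) (P : Set A → List A),
      IsCED Ω (fun τ => if τ = σ then some b else Obs τ) σN P →
        (b = false → σN = σ ∧ ∀ s ∈ Ω, Obs (P s) = some true) ∧
        (b = true → Obs σN = some false ∧ (∃ s ∈ Ω, P s = σ) ∧
          ∀ s ∈ Ω, P s = σ ∨ Obs (P s) = some true) :=
  global_cex_structure_general Ω Obs hmod σ b
end
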